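/- arXiv:2602.09896 — 9 statements merged into one kernel-verified Lean document; each statement's English description precedes it below -/
import Mathlib

section
/- The set Σ↑ of upward-closed tiles is closed under the tile product: if t₁ and t₂ are upward-closed subsets of Q × {0,1} × Q for the order ⊑, then t₁ ∘ t₂ := {(p, min(c₁,c₂), r) | ∃ q, (p,c₁,q) ∈ t₁ and (q,c₂,r) ∈ t₂} is also upward-closed. -/
variable {Q : Type*} [Fintype Q] [LinearOrder Q]

/-- A Büchi transition: (source, priority, target), priority 0 = Büchi. -/
abbrev BTrans (Q : Type*) := Q × Fin 2 × Q

/-- The order ⊑ on transitions. -/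
def TransLE (d d' : BTrans Q) : Prop :=
  d.1 ≤ d'.1 ∧ d'.2.2 ≤ d.2.2 ∧ (d.1 = d'.1 → d.2.2 = d'.2.2 → d.2.1 ≤ d'.2.1)

/-- A tile is upward-closed for ⊑. -/
def UpClosed (t : Set (BTrans Q)) : Prop := ∀ d ∈ t, ∀ d', TransLE d d' → d' ∈ t

/-- Upward closure of a tile. -/
def upclos (s : Set (BTrans Q)) : Set (BTrans Q) := {d' | ∃ d ∈ s, TransLE d d'}

/-- The tile product. -/
def tmul (t₁ t₂ : Set (BTrans Q)) : Set (BTrans Q) :=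
  {x | ∃ p q r c₁ c₂, (p, c₁, q) ∈ t₁ ∧ (q, c₂, r) ∈ t₂ ∧ x = (p, min c₁ c₂, r)}

/-- Downwards-closed subset of states. -/
def DownClosed (U : Set Q) : Prop := ∀ q ∈ U, ∀ q', q' ≤ q → q' ∈ U

/-- Acceptance of an infinite tile word from initial set I: there is a run
seeing priority 0 infinitely often. -/
def InfAccept (I : Set Q) (w : ℕ → Set (BTrans Q)) : Prop :=
  ∃ (ρ : ℕ → Q) (c : ℕ → Fin 2), ρ 0 ∈ I ∧ (∀ j, (ρ j, c j, ρ (j + 1)) ∈ w j) ∧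
    ∀ N, ∃ j ≥ N, c j = 0

/-- Concatenation of a finite tile word with an infinite tile word. -/
def wcat (u : List (Set (BTrans Q))) (w : ℕ → Set (BTrans Q)) : ℕ → Set (BTrans Q) :=
  fun j => if j < u.length then u.getD j ∅ else w (j - u.length)

/-- Infinite repetition v^ω of a finite tile word. -/
def wpow (v : List (Set (BTrans Q))) : ℕ → Set (BTrans Q) :=
  fun j => v.getD (j % v.length) ∅

/-- q is reachable from I by a partial run over the finite tile word u. -/
def Reach (I : Set Q) (u : List (Set (BTrans Q))) (q : Q) : Prop :=
  ∃ (ρ : ℕ → Q) (c : ℕ → Fin 2), ρ 0 ∈ I ∧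
    (∀ i < u.length, (ρ i, c i, ρ (i + 1)) ∈ u.getD i ∅) ∧ ρ u.length = q

theorem UpClosed.mem_of_le {Q : Type*} [LinearOrder Q] {t : Set (BTrans Q)} (ht : UpClosed t)
    {p q p' q' : Q} {c : Fin 2} (h : (p, c, q) ∈ t) (hp : p ≤ p') (hq : q' ≤ q) (c' : Fin 2) :
    (p', max c c', q') ∈ t :=
  ht _ h _ ⟨hp, hq, fun _ _ => le_max_left c c'⟩

theorem UpClosed.mem_of_lt_fst {Q : Type*} [LinearOrder Q] {t : Set (BTrans Q)}
    (ht : UpClosed t) {p q p' : Q} {c : Fin 2} (h : (p, c, q) ∈ t) (hp : p < p') (c' : Fin 2) :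
    (p', c', q) ∈ t :=
  ht _ h _ ⟨hp.le, le_rfl, fun hpp => absurd hpp hp.ne⟩

theorem UpClosed.mem_of_lt_snd {Q : Type*} [LinearOrder Q] {t : Set (BTrans Q)}
    (ht : UpClosed t) {p q q' : Q} {c : Fin 2} (h : (p, c, q) ∈ t) (hq : q' < q) (c' : Fin 2) :
    (p, c', q') ∈ t :=
  ht _ h _ ⟨le_rfl, hq.le, fun _ hqq => absurd hqq hq.ne'⟩

theorem min_mem_tmul {Q : Type*} {t₁ t₂ : Set (BTrans Q)} {p q r : Q} {c₁ c₂ : Fin 2}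
    (h₁ : (p, c₁, q) ∈ t₁) (h₂ : (q, c₂, r) ∈ t₂) : (p, min c₁ c₂, r) ∈ tmul t₁ t₂ :=
  ⟨p, q, r, c₁, c₂, h₁, h₂, rfl⟩

/-- When source and target are unchanged, both factors can absorb the new priority `c'`,
since `min (max c₁ c') (max c₂ c') = max (min c₁ c₂) c' = c'`; otherwise a factor whose
endpoint strictly moved can take the priority `c'` outright. -/
theorem tmul_upClosed_general (Q : Type*) [LinearOrder Q]
    (t₁ t₂ : Set (BTrans Q)) (h₁ : UpClosed t₁) (h₂ : UpClosed t₂) :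
    UpClosed (tmul t₁ t₂) := by
  rintro _ ⟨p, q, r, c₁, c₂, hq₁, hq₂, rfl⟩ ⟨p', c', r'⟩ ⟨hp, hr, hc⟩
  dsimp only at hp hr hc
  rcases hp.lt_or_eq with hp | rfl
  · simpa only [min_eq_left (le_max_right c₂ c')] using
      min_mem_tmul (h₁.mem_of_lt_fst hq₁ hp c') (h₂.mem_of_le hq₂ le_rfl hr c')
  rcases hr.lt_or_eq with hr | rfl
  · simpa only [min_eq_right (le_max_right c₁ c')] using
      min_mem_tmul (h₁.mem_of_le hq₁ le_rfl le_rfl c') (h₂.mem_of_lt_snd hq₂ hr c')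
  · simpa only [← max_min_distrib_right, max_eq_right (hc rfl rfl)] using
      min_mem_tmul (h₁.mem_of_le hq₁ le_rfl le_rfl c') (h₂.mem_of_le hq₂ le_rfl le_rfl c')

theorem tmul_upClosed (Q : Type*) [Fintype Q] [LinearOrder Q]
    (t₁ t₂ : Set (BTrans Q)) (h₁ : UpClosed t₁) (h₂ : UpClosed t₂) :
    UpClosed (tmul t₁ t₂) :=
  tmul_upClosed_general Q t₁ t₂ h₁ h₂
end

section
/- Existence and uniqueness of skeletons: for every upward-closed tile t ∈ Σ↑, there exists a unique inclusion-minimal tile s whose upward closure (for ⊑) equals t. Moreover this skeleton s satisfies: for all distinct transitions (p,c,p') and (q,c',q') in s, p ≠ q and p' ≠ q'. -/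
variable {Q : Type*} [Fintype Q] [LinearOrder Q]

/-! The skeleton of `t` is its set of ⊑-minimal elements. Since `Q` is finite, every element of
`t` lies above a minimal one, and any `s` with `upclos s = t` must contain each minimal element.
Two transitions sharing their source or their target are ⊑-comparable, so distinct minimal ones
differ in both. -/

section Skeleton

variable {α : Type*} [LinearOrder α]

theorem transLE_refl (d : BTrans α) : TransLE d d := ⟨le_rfl, le_rfl, fun _ _ => le_rfl⟩

theorem transLE_trans {a b c : BTrans α} (hab : TransLE a b) (hbc : TransLE b c) :
    TransLE a c := by
  obtain ⟨hab₁, hab₂, hab₃⟩ := hab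
  obtain ⟨hbc₁, hbc₂, hbc₃⟩ := hbc
  refine ⟨hab₁.trans hbc₁, hbc₂.trans hab₂, fun hac₁ hac₂ => ?_⟩
  have hab₁' : a.1 = b.1 := hab₁.antisymm (hac₁ ▸ hbc₁)
  have hab₂' : a.2.2 = b.2.2 := (hac₂ ▸ hbc₂).antisymm hab₂
  exact (hab₃ hab₁' hab₂').trans (hbc₃ (hab₁' ▸ hac₁) (hab₂' ▸ hac₂))

theorem transLE_antisymm {a b : BTrans α} (hab : TransLE a b) (hba : TransLE b a) : a = b := by
  obtain ⟨hab₁, hab₂, hab₃⟩ := hab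
  obtain ⟨hba₁, hba₂, hba₃⟩ := hba
  have h₁ : a.1 = b.1 := hab₁.antisymm hba₁
  have h₂ : a.2.2 = b.2.2 := hba₂.antisymm hab₂
  exact Prod.ext h₁ (Prod.ext ((hab₃ h₁ h₂).antisymm (hba₃ h₁.symm h₂.symm)) h₂)

theorem transLE_total_of_source_eq {d d' : BTrans α} (h : d.1 = d'.1) :
    TransLE d d' ∨ TransLE d' d := by
  rcases lt_trichotomy d.2.2 d'.2.2 with hlt | heq | hgt
  · exact Or.inr ⟨h.ge, hlt.le, fun _ h₂ => absurd h₂ hlt.ne'⟩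
  · rcases le_total d.2.1 d'.2.1 with hc | hc
    · exact Or.inl ⟨h.le, heq.ge, fun _ _ => hc⟩
    · exact Or.inr ⟨h.ge, heq.le, fun _ _ => hc⟩
  · exact Or.inl ⟨h.le, hgt.le, fun _ h₂ => absurd h₂ hgt.ne'⟩

theorem transLE_total_of_target_eq {d d' : BTrans α} (h : d.2.2 = d'.2.2) :
    TransLE d d' ∨ TransLE d' d := by
  rcases lt_trichotomy d.1 d'.1 with hlt | heq | hgt
  · exact Or.inl ⟨hlt.le, h.ge, fun h₁ _ => absurd h₁ hlt.ne⟩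
  · exact transLE_total_of_source_eq heq
  · exact Or.inr ⟨hgt.le, h.le, fun h₁ _ => absurd h₁ hgt.ne⟩

theorem wellFounded_transLT [Finite α] :
    WellFounded fun a b : BTrans α => TransLE a b ∧ a ≠ b := by
  have : IsTrans (BTrans α) fun a b => TransLE a b ∧ a ≠ b :=
    ⟨fun _ _ _ ⟨hab, _⟩ ⟨hbc, hbc_ne⟩ =>
      ⟨transLE_trans hab hbc, fun hac => hbc_ne (transLE_antisymm hbc (hac ▸ hab))⟩⟩
  have : Std.Irrefl fun a b : BTrans α => TransLE a b ∧ a ≠ b := ⟨fun _ h => h.2 rfl⟩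
  exact Finite.wellFounded_of_trans_of_irrefl _

theorem subset_upclos (s : Set (BTrans α)) : s ⊆ upclos s := fun d hd => ⟨d, hd, transLE_refl d⟩

def skeleton (t : Set (BTrans α)) : Set (BTrans α) :=
  {d | d ∈ t ∧ ∀ e ∈ t, TransLE e d → e = d}

theorem exists_mem_skeleton_transLE [Finite α] {t : Set (BTrans α)} {d : BTrans α} (hd : d ∈ t) :
    ∃ m ∈ skeleton t, TransLE m d := by
  obtain ⟨m, ⟨hmt, hmd⟩, hmin⟩ :=
    wellFounded_transLT.has_min {e | e ∈ t ∧ TransLE e d} ⟨d, hd, transLE_refl d⟩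
  refine ⟨m, ⟨hmt, fun e het hem => ?_⟩, hmd⟩
  by_contra hne
  exact hmin e ⟨het, transLE_trans hem hmd⟩ ⟨hem, hne⟩

theorem upclos_skeleton [Finite α] {t : Set (BTrans α)} (ht : UpClosed t) :
    upclos (skeleton t) = t := by
  ext d
  constructor
  · rintro ⟨m, ⟨hmt, -⟩, hmd⟩
    exact ht m hmt d hmd
  · intro hd
    obtain ⟨m, hm, hmd⟩ := exists_mem_skeleton_transLE hd
    exact ⟨m, hm, hmd⟩

theorem skeleton_subset_of_upclos_eq {s t : Set (BTrans α)} (h : upclos s = t) :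
    skeleton t ⊆ s := by
  rintro d ⟨hdt, hdmin⟩
  obtain ⟨e, hes, hed⟩ : d ∈ upclos s := h ▸ hdt
  have het : e ∈ t := h ▸ subset_upclos s hes
  exact hdmin e het hed ▸ hes

theorem eq_of_mem_skeleton_of_transLE_total {t : Set (BTrans α)} {d d' : BTrans α}
    (hd : d ∈ skeleton t) (hd' : d' ∈ skeleton t) (h : TransLE d d' ∨ TransLE d' d) :
    d = d' :=
  h.elim (fun h => hd'.2 d hd.1 h) (fun h => (hd.2 d' hd'.1 h).symm)

end Skeleton

theorem skeleton_exists_unique (Q : Type*) [Fintype Q] [LinearOrder Q]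
    (t : Set (BTrans Q)) (ht : UpClosed t) :
    ∃! s : Set (BTrans Q),
      upclos s = t ∧
      (∀ s' : Set (BTrans Q), upclos s' = t → s ⊆ s') ∧
      (∀ d ∈ s, ∀ d' ∈ s, d ≠ d' → d.1 ≠ d'.1 ∧ d.2.2 ≠ d'.2.2) := by
  have hup : upclos (skeleton t) = t := upclos_skeleton ht
  refine ⟨skeleton t, ⟨hup, fun s' hs' => skeleton_subset_of_upclos_eq hs', ?_⟩, ?_⟩
  · intro d hd d' hd' hne
    have hinc := fun h => hne (eq_of_mem_skeleton_of_transLE_total hd hd' h)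
    exact ⟨fun h => hinc (transLE_total_of_source_eq h), fun h => hinc (transLE_total_of_target_eq h)⟩
  · rintro s ⟨hs, hmin, -⟩
    exact (hmin _ hup).antisymm (skeleton_subset_of_upclos_eq hs)
end

section
/- In an ordered Büchi automaton A = (Q, ≤, I, Γ), for any tile t ∈ Γ, the word t^ω is accepted by A (i.e., there exists a run over the constant tile sequence t,t,t,... starting in I that uses transitions of priority 0 infinitely often) if and only if there exists a state q ∈ I with (q,0,q) ∈ t. -/
variable {Q : Type*} [Fintype Q] [LinearOrder Q]

/-! Take the least state `m` visited by an accepting run over `t^ω`. Either the run leaves `m`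
along some transition `(m, c, q)` with `q > m`, or from its first visit on it loops at `m` and
eventually takes a loop of priority `0`. In both cases `(m, 0, m)` lies above a transition of
`t`, hence in `t`, and `m ∈ I` because `I` is downwards closed. -/

theorem transLE_zero_loop {α : Type*} [LinearOrder α] {m q : α} {c : Fin 2} (hmq : m ≤ q)
    (hc : q = m → c = 0) : TransLE (m, c, q) (m, 0, m) :=
  ⟨le_rfl, hmq, fun _ hq => (hc hq).le⟩

theorem exists_eq_and_imp_eq_zero {α β : Type*} [Zero β] {ρ : ℕ → α} {c : ℕ → β} {a : α} {k : ℕ}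
    (hk : ρ k = a) (hinf : ∀ N, ∃ j ≥ N, c j = 0) :
    ∃ j, ρ j = a ∧ (ρ (j + 1) = a → c j = 0) := by
  by_contra! h
  have stay : ∀ i, ρ (k + i) = a := by
    intro i
    induction i with
    | zero => exact hk
    | succ i ih => exact (h _ ih).1
  obtain ⟨j, hkj, hcj⟩ := hinf k
  obtain ⟨i, rfl⟩ := Nat.exists_eq_add_of_le hkj
  exact (h _ (stay i)).2 hcj

theorem InfAccept.exists_zero_loop {α : Type*} [LinearOrder α] [WellFoundedLT α] {I : Set α}
    (hI : DownClosed I) {t : Set (BTrans α)} (ht : UpClosed t) (h : InfAccept I fun _ => t) :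
    ∃ q ∈ I, (q, (0 : Fin 2), q) ∈ t := by
  obtain ⟨ρ, c, hρ0, hstep, hinf⟩ := h
  obtain ⟨j, hj, hc⟩ := exists_eq_and_imp_eq_zero (ρ := ρ) (k := Function.argmin ρ) rfl hinf
  refine ⟨ρ (Function.argmin ρ), hI _ hρ0 _ (Function.argmin_le ρ 0), ht _ (hj ▸ hstep j) _ ?_⟩
  exact transLE_zero_loop (Function.argmin_le ρ (j + 1)) hc

theorem infAccept_const_of_zero_loop {α : Type*} {I : Set α} {t : Set (BTrans α)} {q : α}
    (hq : q ∈ I) (hqq : (q, (0 : Fin 2), q) ∈ t) : InfAccept I fun _ => t :=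
  ⟨fun _ => q, fun _ => 0, hq, fun _ => hqq, fun N => ⟨N, le_rfl, rfl⟩⟩

theorem tile_omega_accepted_iff (Q : Type*) [Fintype Q] [LinearOrder Q]
    (I : Set Q) (hI : DownClosed I) (t : Set (BTrans Q)) (ht : UpClosed t) :
    InfAccept I (fun _ => t) ↔ ∃ q ∈ I, (q, (0 : Fin 2), q) ∈ t :=
  ⟨InfAccept.exists_zero_loop hI ht, fun ⟨_, hq, hqq⟩ => infAccept_const_of_zero_loop hq hqq⟩
end

section
/- For an ordered Büchi automaton A = (Q, ≤, I, Γ) and any state q of an upward-closed tile t: if a run over a finite tile word w ∈ (Σ↑)⁺ ends in state q, then for every q' < q there exists a run over w (from the same starting state) that ends in q' and contains at least one Büchi (priority-0) transition. -/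
variable {Q : Type*} [Fintype Q] [LinearOrder Q]

theorem UpClosed.mem_of_target_lt {Q : Type*} [LinearOrder Q] {t : Set (BTrans Q)}
    (ht : UpClosed t) {p q q' : Q} {c : Fin 2} (h : (p, c, q) ∈ t) (hq' : q' < q) (c' : Fin 2) : (p, c', q') ∈ t :=
  ht _ h _ ⟨le_rfl, hq'.le, fun _ hqq' => absurd hqq' hq'.ne'⟩

theorem run_lower_with_buchi_general (Q : Type*) [LinearOrder Q]
    (w : List (Set (BTrans Q))) (hw : w ≠ []) (hup : ∀ t ∈ w, UpClosed t)
    (p q : Q) (ρ : ℕ → Q) (c : ℕ → Fin 2)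
    (h0 : ρ 0 = p)
    (hrun : ∀ i < w.length, (ρ i, c i, ρ (i + 1)) ∈ w.getD i ∅)
    (hend : ρ w.length = q) :
    ∀ q' < q, ∃ (ρ' : ℕ → Q) (c' : ℕ → Fin 2),
      ρ' 0 = p ∧
      (∀ i < w.length, (ρ' i, c' i, ρ' (i + 1)) ∈ w.getD i ∅) ∧
      ρ' w.length = q' ∧
      ∃ i < w.length, c' i = 0 := by
  intro q' hq'
  obtain ⟨n, hn⟩ : ∃ n, w.length = n + 1 :=
    Nat.exists_eq_add_one.mpr (List.length_pos_iff.mpr hw)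
  -- Only the last step changes: it is redirected to `q'`, which an upward-closed tile
  -- allows with any priority since the target strictly decreases.
  refine ⟨Function.update ρ (n + 1) q', Function.update c n 0, ?_, fun i hi => ?_, ?_,
    n, by omega, by simp⟩
  · simp [h0]
  · rcases Nat.lt_succ_iff_lt_or_eq.mp (hn ▸ hi) with hlt | rfl
    · simpa [hlt.ne, (hlt.trans n.lt_succ_self).ne] using hrun i hi
    · have hlast : w.getD i ∅ ∈ w := by
        rw [List.getD_eq_getElem _ _ hi]
        exact List.getElem_mem hi
      have hstep := hrun i hi
      rw [← hn, hend] at hstep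
      simpa [hi.ne] using (hup _ hlast).mem_of_target_lt hstep hq' 0
  · simp [hn]

theorem run_lower_with_buchi (Q : Type*) [Fintype Q] [LinearOrder Q]
    (w : List (Set (BTrans Q))) (hw : w ≠ []) (hup : ∀ t ∈ w, UpClosed t)
    (p q : Q) (ρ : ℕ → Q) (c : ℕ → Fin 2)
    (h0 : ρ 0 = p)
    (hrun : ∀ i < w.length, (ρ i, c i, ρ (i + 1)) ∈ w.getD i ∅)
    (hend : ρ w.length = q) :
    ∀ q' < q, ∃ (ρ' : ℕ → Q) (c' : ℕ → Fin 2),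
      ρ' 0 = p ∧
      (∀ i < w.length, (ρ' i, c' i, ρ' (i + 1)) ∈ w.getD i ∅) ∧
      ρ' w.length = q' ∧
      ∃ i < w.length, c' i = 0 :=
  run_lower_with_buchi_general Q w hw hup p q ρ c h0 hrun hend
end

section
/- Prefix-independent positionality property of ordered Büchi languages: let A = (Q, ≤, I, Γ) be an ordered Büchi automaton with language L. For all finite nonempty tile words v, v' over Γ and all finite tile words u, if u(vv')^ω ∈ L then uv^ω ∈ L or u(v')^ω ∈ L. -/
variable {Q : Type*} [Fintype Q] [LinearOrder Q]

/-!
Cut an accepting run of `u (v v')^ω` at the borders of the `v`- and `v'`-blocks and let `s n`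
be the state at the `n`-th cut. As `Q` is finite and priority `0` occurs infinitely often, some
block `n` has `s n ≤ s (n + 1)`, strictly or with a priority-`0` transition inside it (otherwise
`s` would be non-increasing, hence eventually constant); taking the first such block also gives
`s n ≤ s 0`. Upward closure of the tiles lets a run lower its last
state, and a strict lowering makes the last priority `0`. Lowering the end of block `n` to `s n`
thus yields an accepting loop at `s n` over `v` or `v'`, lowering the end of the run over `u`
reaches `s n` from the downward-closed `I`, and pumping the loop gives the accepting run.
-/

theorem exists_le_zero_le_succ_of_frequently {α : Type*} [LinearOrder α] [WellFoundedLT α]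
    (s : ℕ → α) {B : ℕ → Prop} (hB : ∃ᶠ n in Filter.atTop, B n) :
    ∃ n, s n ≤ s 0 ∧ s n ≤ s (n + 1) ∧ (s n < s (n + 1) ∨ B n) := by
  classical
  let P n := s n ≤ s (n + 1) ∧ (s n < s (n + 1) ∨ B n)
  have hdesc : ∀ n, ¬ P n → s (n + 1) ≤ s n :=
    fun n hn => not_lt.mp fun h => hn ⟨h.le, .inl h⟩
  have hP : ∃ n, P n := by
    by_contra hno
    have hno : ∀ n, ¬ P n := not_exists.mp hno
    have hanti : Antitone s := antitone_nat_of_succ_le fun n => hdesc n (hno n)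
    obtain ⟨n, hn, hBn⟩ := Filter.frequently_atTop.mp hB (Function.argmin s)
    have hlt : s (n + 1) < s n := (hdesc n (hno n)).lt_of_ne fun h => hno n ⟨h.ge, .inr hBn⟩
    exact hlt.not_ge ((hanti hn).trans (Function.argmin_le s _))
  have hfirst : ∀ k ≤ Nat.find hP, s k ≤ s 0 := by
    intro k hk
    induction k with
    | zero => exact le_rfl
    | succ k ih => exact (hdesc k (Nat.find_min hP (by omega))).trans (ih (by omega))
  exact ⟨Nat.find hP, hfirst _ le_rfl, Nat.find_spec hP⟩

theorem StrictMono.frequently_block {T : ℕ → ℕ} (hT : StrictMono T) {P : ℕ → Prop}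
    (hP : ∃ᶠ j in Filter.atTop, P j) :
    ∃ᶠ n in Filter.atTop, ∃ i < T (n + 1) - T n, P (T n + i) := by
  classical
  refine Filter.frequently_atTop.mpr fun M => ?_
  obtain ⟨j, hj, hPj⟩ := Filter.frequently_atTop.mp hP (T M)
  have hex : ∃ k, j < T k := ⟨j + 1, (Nat.lt_succ_self j).trans_le (hT.id_le _)⟩
  have hM : M < Nat.find hex := by
    by_contra! h
    exact (Nat.find_spec hex).not_ge ((hT.monotone h).trans hj)
  obtain ⟨n, hn⟩ := Nat.exists_eq_add_one_of_ne_zero (by omega : Nat.find hex ≠ 0)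
  have hlo : T n ≤ j := not_lt.mp (Nat.find_min hex (by omega))
  have hhi : j < T (n + 1) := hn ▸ Nat.find_spec hex
  exact ⟨n, by omega, j - T n, by omega, by rwa [Nat.add_sub_cancel' hlo]⟩

section Blocks

variable {α : Type*} (u v v' : List α)

def blockWord (n : ℕ) : List α := if n % 2 = 0 then v else v'

def blockStart (n : ℕ) : ℕ := u.length + n / 2 * (v.length + v'.length) + n % 2 * v.length

theorem blockWord_eq_or (n : ℕ) : blockWord v v' n = v ∨ blockWord v v' n = v' := by
  unfold blockWord
  split_ifs <;> simp

theorem blockStart_zero : blockStart u v v' 0 = u.length := by simp [blockStart]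

theorem blockStart_succ (n : ℕ) :
    blockStart u v v' (n + 1) = blockStart u v v' n + (blockWord v v' n).length := by
  unfold blockStart blockWord
  rcases Nat.mod_two_eq_zero_or_one n with h | h
  · rw [show (n + 1) / 2 = n / 2 by omega, show (n + 1) % 2 = 1 by omega, h]
    simp
  · rw [show (n + 1) / 2 = n / 2 + 1 by omega, show (n + 1) % 2 = 0 by omega, h]
    simp only [one_ne_zero, if_false]
    ring

theorem blockStart_strictMono (hv : v ≠ []) (hv' : v' ≠ []) : StrictMono (blockStart u v v') :=
  strictMono_nat_of_lt_succ fun n => by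
    rw [blockStart_succ]
    rcases blockWord_eq_or v v' n with h | h <;> rw [h] <;> simpa [List.length_pos_iff]

end Blocks

section Runs

variable {Q : Type*}

def IsRun (w : ℕ → Set (BTrans Q)) (ρ : ℕ → Q) (c : ℕ → Fin 2) : Prop :=
  ∀ j, (ρ j, c j, ρ (j + 1)) ∈ w j

def IsRunOn (w : List (Set (BTrans Q))) (σ : ℕ → Q) (c : ℕ → Fin 2) : Prop :=
  ∀ i < w.length, (σ i, c i, σ (i + 1)) ∈ w.getD i ∅

def IsBuchiLoop (w : List (Set (BTrans Q))) (x : Q) : Prop :=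
  ∃ (σ : ℕ → Q) (c : ℕ → Fin 2), IsRunOn w σ c ∧ σ 0 = x ∧ σ w.length = x ∧
    ∃ i < w.length, c i = 0

variable {u w : List (Set (BTrans Q))} {σ : ℕ → Q} {c : ℕ → Fin 2}

theorem IsRunOn.isRun_wpow (hrun : IsRunOn w σ c) (hpos : 0 < w.length)
    (hper : σ w.length = σ 0) :
    IsRun (wpow w) (fun j => σ (j % w.length)) (fun j => c (j % w.length)) := by
  intro j
  have hstep : σ ((j + 1) % w.length) = σ (j % w.length + 1) := by
    rw [← Nat.mod_add_mod]
    rcases Nat.lt_or_eq_of_le (Nat.succ_le_of_lt (Nat.mod_lt j hpos)) with hlt | heq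
    · rw [Nat.mod_eq_of_lt hlt]
    · rw [show j % w.length + 1 = w.length from heq, Nat.mod_self, hper]
  show (_, _, σ ((j + 1) % w.length)) ∈ w.getD (j % w.length) ∅
  rw [hstep]
  exact hrun _ (Nat.mod_lt j hpos)

theorem IsRunOn.isRun_wcat {w : ℕ → Set (BTrans Q)} {τ : ℕ → Q} {e : ℕ → Fin 2}
    (hu : IsRunOn u σ c) (hw : IsRun w τ e) (hjoin : σ u.length = τ 0) :
    IsRun (wcat u w) (fun j => if j < u.length then σ j else τ (j - u.length))
      (fun j => if j < u.length then c j else e (j - u.length)) := by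
  intro j
  rcases lt_trichotomy (j + 1) u.length with hlt | heq | hgt
  · simpa [wcat, hlt, show j < u.length by omega] using hu j (by omega)
  · simpa [wcat, heq, hjoin, show j < u.length by omega] using hu j (by omega)
  · simpa [wcat, show ¬ j < u.length by omega, show ¬ j + 1 < u.length by omega,
      show j + 1 - u.length = j - u.length + 1 by omega] using hw (j - u.length)

theorem Reach.of_isRun_wcat {I : Set Q} {w : ℕ → Set (BTrans Q)} {ρ : ℕ → Q}
    (h0 : ρ 0 ∈ I) (hrun : IsRun (wcat u w) ρ c) : Reach I u (ρ u.length) :=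
  ⟨ρ, c, h0, fun i hi => by simpa [wcat, hi] using hrun i, rfl⟩

theorem infAccept_wcat_wpow {I : Set Q} {x : Q} (hreach : Reach I u x)
    (hloop : IsBuchiLoop w x) : InfAccept I (wcat u (wpow w)) := by
  obtain ⟨ρ, c, h0, hu, rfl⟩ := hreach
  obtain ⟨σ, e, hw, hσ0, hσL, i, hi, hei⟩ := hloop
  have hpos : 0 < w.length := by omega
  have hrun := IsRunOn.isRun_wcat hu (hw.isRun_wpow hpos (hσL.trans hσ0.symm)) (by simp [hσ0])
  refine ⟨_, _, ?_, hrun, fun N => ⟨u.length + N * w.length + i, by nlinarith, ?_⟩⟩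
  · rcases Nat.eq_zero_or_pos u.length with hu0 | hu0
    · simpa [hu0, hσ0] using h0
    · simpa [hu0] using h0
  · rw [if_neg (by omega), Nat.add_assoc, Nat.add_sub_cancel_left, Nat.mul_add_mod',
      Nat.mod_eq_of_lt hi, hei]

end Runs

section Lowering

variable {Q : Type*} [LinearOrder Q]

theorem UpClosed.zero_mem_of_lt {t : Set (BTrans Q)} (ht : UpClosed t) {p q q' : Q} {c : Fin 2}
    (h : (p, c, q) ∈ t) (hq : q' < q) : (p, 0, q') ∈ t :=
  ht _ h _ ⟨le_rfl, hq.le, fun _ h' => absurd h'.symm hq.ne⟩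

variable {w : List (Set (BTrans Q))} {σ : ℕ → Q} {c : ℕ → Fin 2}

theorem IsRunOn.exists_lower_last (hw : ∀ t ∈ w, UpClosed t) (hne : w ≠ [])
    (hrun : IsRunOn w σ c) {x : Q} (hx : x ≤ σ w.length) :
    ∃ (σ' : ℕ → Q) (c' : ℕ → Fin 2), IsRunOn w σ' c' ∧ σ' 0 = σ 0 ∧ σ' w.length = x ∧
      (x < σ w.length ∨ (∃ i < w.length, c i = 0) →
        ∃ i < w.length, c' i = 0) := by
  rcases hx.eq_or_lt with rfl | hlt
  · exact ⟨σ, c, hrun, rfl, rfl, fun h => h.resolve_left (lt_irrefl _)⟩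
  obtain ⟨n, hn⟩ := Nat.exists_eq_add_one_of_ne_zero (List.length_pos_iff.mpr hne).ne'
  refine ⟨Function.update σ (n + 1) x, Function.update c n 0, fun i hi => ?_,
    by simp, by simp [hn], fun _ => ⟨n, by omega, by simp⟩⟩
  rcases (Nat.lt_succ_iff.mp (hn ▸ hi)).eq_or_lt with rfl | hi'
  · have hlast : UpClosed (w.getD i ∅) :=
      hw _ (by rw [List.getD_eq_getElem _ _ hi]; exact List.getElem_mem hi)
    simpa using hlast.zero_mem_of_lt (hn ▸ hrun i hi) (hn ▸ hlt)
  · rw [Function.update_of_ne (show i ≠ n + 1 by omega),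
      Function.update_of_ne (show i + 1 ≠ n + 1 by omega), Function.update_of_ne hi'.ne]
    exact hrun i hi

theorem IsRunOn.isBuchiLoop (hw : ∀ t ∈ w, UpClosed t) (hne : w ≠ []) (hrun : IsRunOn w σ c)
    (hle : σ 0 ≤ σ w.length) (hprog : σ 0 < σ w.length ∨ ∃ i < w.length, c i = 0) :
    IsBuchiLoop w (σ 0) := by
  obtain ⟨σ', c', hrun', h0, hlast, hbuchi⟩ := hrun.exists_lower_last hw hne hle
  exact ⟨σ', c', hrun', h0, hlast, hbuchi hprog⟩

theorem Reach.of_le {I : Set Q} (hI : DownClosed I) {u : List (Set (BTrans Q))}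
    (hu : ∀ t ∈ u, UpClosed t) {a x : Q} (h : Reach I u a) (hx : x ≤ a) : Reach I u x := by
  obtain ⟨ρ, c, h0, hrun, rfl⟩ := h
  rcases eq_or_ne u [] with rfl | hne
  · exact ⟨fun _ => x, c, hI _ h0 _ hx, fun i hi => absurd hi (Nat.not_lt_zero i), rfl⟩
  · obtain ⟨σ, c', hrun', h0', hlast, -⟩ := IsRunOn.exists_lower_last hu hne hrun hx
    exact ⟨σ, c', h0' ▸ h0, hrun', hlast⟩

end Lowering

theorem wcat_wpow_append_blockStart {Q : Type*} (u v v' : List (Set (BTrans Q))) {n i : ℕ}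
    (hi : i < (blockWord v v' n).length) :
    wcat u (wpow (v ++ v')) (blockStart u v v' n + i) = (blockWord v v' n).getD i ∅ := by
  have hoffset : blockStart u v v' n + i - u.length =
      n / 2 * (v ++ v').length + (n % 2 * v.length + i) := by
    simp only [blockStart, List.length_append]
    omega
  have hlt : n % 2 * v.length + i < (v ++ v').length := by
    unfold blockWord at hi
    rcases Nat.mod_two_eq_zero_or_one n with h | h <;> simp [h] at hi ⊢ <;> omega
  simp only [wcat, wpow]
  rw [if_neg (by unfold blockStart; omega), hoffset, Nat.mul_add_mod', Nat.mod_eq_of_lt hlt]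
  unfold blockWord at hi ⊢
  rcases Nat.mod_two_eq_zero_or_one n with h | h
  · simp only [h, if_true] at hi ⊢
    simpa using List.getD_append _ _ _ _ hi
  · simp only [h, one_ne_zero, if_false, one_mul] at hi ⊢
    simpa using List.getD_append_right v v' ∅ (v.length + i) (by omega)

theorem third_local_preference (Q : Type*) [Fintype Q] [LinearOrder Q]
    (Γ : Set (Set (BTrans Q))) (hΓ : ∀ t ∈ Γ, UpClosed t)
    (I : Set Q) (hI : DownClosed I)
    (u v v' : List (Set (BTrans Q)))
    (hu : ∀ t ∈ u, t ∈ Γ) (hv : ∀ t ∈ v, t ∈ Γ) (hv' : ∀ t ∈ v', t ∈ Γ)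
    (hvne : v ≠ []) (hv'ne : v' ≠ [])
    (h : InfAccept I (wcat u (wpow (v ++ v')))) :
    InfAccept I (wcat u (wpow v)) ∨ InfAccept I (wcat u (wpow v')) := by
  obtain ⟨ρ, c, hρ0, hrun, hinf⟩ := h
  obtain ⟨n, hn0, hle, hprog⟩ := exists_le_zero_le_succ_of_frequently
    (fun n => ρ (blockStart u v v' n))
    ((blockStart_strictMono u v v' hvne hv'ne).frequently_block (Filter.frequently_atTop.mpr hinf))
  simp only [blockStart_zero, blockStart_succ, Nat.add_sub_cancel_left] at hn0 hle hprog
  have hblock : IsRunOn (blockWord v v' n) (fun i => ρ (blockStart u v v' n + i))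
      (fun i => c (blockStart u v v' n + i)) := fun i hi => by
    simpa [wcat_wpow_append_blockStart u v v' hi, ← add_assoc]
      using hrun (blockStart u v v' n + i)
  have hreach : Reach I u (ρ (blockStart u v v' n)) :=
    (Reach.of_isRun_wcat hρ0 hrun).of_le hI (fun t ht => hΓ t (hu t ht)) hn0
  have hacc : ∀ w, blockWord v v' n = w → (∀ t ∈ w, t ∈ Γ) → w ≠ [] →
      InfAccept I (wcat u (wpow w)) := by
    rintro w rfl hw hne
    exact infAccept_wcat_wpow hreach
      (hblock.isBuchiLoop (fun t ht => hΓ t (hw t ht)) hne hle hprog)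
  rcases blockWord_eq_or v v' n with hb | hb
  · exact .inl (hacc v hb hv hvne)
  · exact .inr (hacc v' hb hv' hv'ne)
end

section
/- Second local preference property for ordered Büchi languages: let A = (Q, ≤, I, Γ) be an ordered Büchi automaton with language L. For every finite tile word u, nonempty finite tile word v, and infinite tile word w over Γ, if uvw ∈ L then uv^ω ∈ L or uw ∈ L. -/
variable {Q : Type*} [Fintype Q] [LinearOrder Q]

/-!
Let `p` and `q` be the states reached by an accepting run on `u v w` after `u` and after `u v`.
Tiles are upward closed, so a transition stays in its tile when its source is raised, and when
the source is raised strictly its priority may be lowered to `0`. If `q ≤ p`, the run on `w` can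
therefore start from `p`, which gives an accepting run on `u w`. If `p < q`, the run on `v` can
start from `q` with a Büchi first transition; it is then a cycle from `q` to `q`, and repeating it
after the run on `u v` gives an accepting run on `u v^ω`.
-/

section

variable {Q : Type*}

lemma wcat_of_lt (u : List (Set (BTrans Q))) (w : ℕ → Set (BTrans Q)) {j : ℕ}
    (h : j < u.length) : wcat u w j = u.getD j ∅ := if_pos h

lemma wcat_of_le (u : List (Set (BTrans Q))) (w : ℕ → Set (BTrans Q)) {j : ℕ}
    (h : u.length ≤ j) : wcat u w j = w (j - u.length) := if_neg h.not_gt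

lemma wcat_wpow (v : List (Set (BTrans Q))) : wcat v (wpow v) = wpow v := by
  funext j
  rcases lt_or_ge j v.length with hj | hj
  · rw [wcat_of_lt _ _ hj, wpow, Nat.mod_eq_of_lt hj]
  · rw [wcat_of_le _ _ hj, wpow, wpow, Nat.mod_eq_sub_mod hj]

lemma Reach.infAccept_wcat {I : Set Q} {u : List (Set (BTrans Q))} {w : ℕ → Set (BTrans Q)}
    {q : Q} (hu : Reach I u q) (hw : InfAccept {q} w) : InfAccept I (wcat u w) := by
  obtain ⟨ρ₁, c₁, h₀, htr₁, rfl⟩ := hu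
  obtain ⟨ρ₂, c₂, hρ₂, htr₂, hinf⟩ := hw
  refine ⟨fun j => if j ≤ u.length then ρ₁ j else ρ₂ (j - u.length),
    fun j => if j < u.length then c₁ j else c₂ (j - u.length), by simpa using h₀,
    fun j => ?_, fun N => ?_⟩
  · rcases lt_or_ge j u.length with hj | hj
    · simpa [hj, hj.le, Nat.succ_le_of_lt hj, wcat_of_lt _ _ hj] using htr₁ j hj
    · have hρ : (if j ≤ u.length then ρ₁ j else ρ₂ (j - u.length)) = ρ₂ (j - u.length) := by
        split_ifs with h
        · rw [le_antisymm h hj, Nat.sub_self, ← Set.mem_singleton_iff.1 hρ₂]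
        · rfl
      simpa [hρ, hj.not_gt, wcat_of_le _ _ hj, Nat.sub_add_comm hj,
        show ¬ j + 1 ≤ u.length by omega] using htr₂ (j - u.length)
  · obtain ⟨j, hjN, hj⟩ := hinf N
    exact ⟨j + u.length, by omega, by simpa using hj⟩

lemma InfAccept.exists_reach_of_wcat {I : Set Q} {u : List (Set (BTrans Q))}
    {w : ℕ → Set (BTrans Q)} (h : InfAccept I (wcat u w)) :
    ∃ q, Reach I u q ∧ InfAccept {q} w := by
  obtain ⟨ρ, c, h₀, htr, hinf⟩ := h
  refine ⟨ρ u.length, ⟨ρ, c, h₀, fun i hi => ?_, rfl⟩,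
    ⟨fun j => ρ (u.length + j), fun j => c (u.length + j), rfl, fun j => ?_, fun N => ?_⟩⟩
  · simpa [wcat_of_lt _ _ hi] using htr i
  · simpa [wcat_of_le _ _ (Nat.le_add_right _ j), Nat.add_assoc] using htr (u.length + j)
  · obtain ⟨j, hjN, hj⟩ := hinf (u.length + N)
    refine ⟨j - u.length, by omega, ?_⟩
    show c (u.length + (j - u.length)) = 0
    rwa [Nat.add_sub_cancel' (by omega)]

lemma infAccept_wpow_of_cycle {v : List (Set (BTrans Q))} {ρ : ℕ → Q} {c : ℕ → Fin 2}
    (htr : ∀ i < v.length, (ρ i, c i, ρ (i + 1)) ∈ v.getD i ∅) {q : Q} (h₀ : ρ 0 = q)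
    (hcyc : ρ v.length = q) {i₀ : ℕ} (hi₀ : i₀ < v.length) (hc : c i₀ = 0) :
    InfAccept {q} (wpow v) := by
  have hn : 0 < v.length := by omega
  have hnext : ∀ j, ρ ((j + 1) % v.length) = ρ (j % v.length + 1) := by
    intro j
    rw [← Nat.add_mod_eq_add_mod_right 1 (Nat.mod_mod j v.length)]
    rcases Nat.lt_or_ge (j % v.length + 1) v.length with h | h
    · rw [Nat.mod_eq_of_lt h]
    · rw [show j % v.length + 1 = v.length by have := Nat.mod_lt j hn; omega, Nat.mod_self,
        hcyc, h₀]
  refine ⟨fun j => ρ (j % v.length), fun j => c (j % v.length), by simpa using h₀, fun j => ?_,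
    fun N => ⟨N * v.length + i₀, ?_, ?_⟩⟩
  · simpa [wpow, hnext] using htr _ (Nat.mod_lt j hn)
  · nlinarith
  · simpa [Nat.mod_eq_of_lt hi₀] using hc

variable [LinearOrder Q]

lemma UpClosed.mem_of_fst_le {t : Set (BTrans Q)} (ht : UpClosed t) {p p' r : Q} {c : Fin 2}
    (h : (p, c, r) ∈ t) (hp : p ≤ p') : (p', c, r) ∈ t :=
  ht _ h _ ⟨hp, le_rfl, fun _ _ => le_rfl⟩

lemma UpClosed.mem_of_fst_lt {t : Set (BTrans Q)} (ht : UpClosed t) {p p' r : Q} {c : Fin 2}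
    (h : (p, c, r) ∈ t) (hp : p < p') (c' : Fin 2) : (p', c', r) ∈ t :=
  ht _ h _ ⟨hp.le, le_rfl, fun he _ => absurd he hp.ne⟩

lemma InfAccept.of_le_start {w : ℕ → Set (BTrans Q)} (hw : UpClosed (w 0)) {p q : Q}
    (h : InfAccept {q} w) (hqp : q ≤ p) : InfAccept {p} w := by
  obtain ⟨ρ, c, rfl, htr, hinf⟩ := h
  refine ⟨Function.update ρ 0 p, c, by simp, fun j => ?_, hinf⟩
  rcases j with _ | j
  · simpa using hw.mem_of_fst_le (htr 0) hqp
  · simpa using htr (j + 1)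

lemma Reach.infAccept_wpow_of_lt {v : List (Set (BTrans Q))} (hv : ∀ t ∈ v, UpClosed t)
    {p q : Q} (h : Reach {p} v q) (hpq : p < q) : InfAccept {p} (wpow v) := by
  obtain ⟨ρ, c, rfl, htr, rfl⟩ := h
  have hn : 0 < v.length := Nat.pos_of_ne_zero fun h0 => by simp [h0] at hpq
  have hv₀ : UpClosed (v.getD 0 ∅) := by
    rw [List.getD_eq_getElem _ _ hn]
    exact hv _ (List.getElem_mem hn)
  have hcyc : InfAccept {ρ v.length} (wpow v) := by
    refine infAccept_wpow_of_cycle (ρ := Function.update ρ 0 (ρ v.length))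
      (c := Function.update c 0 0) (fun i hi => ?_) (by simp) (by simp [hn.ne']) hn (by simp)
    rcases i with _ | i
    · simpa using hv₀.mem_of_fst_lt (htr 0 hn) hpq 0
    · simpa using htr (i + 1) hi
  rw [← wcat_wpow]
  exact Reach.infAccept_wcat ⟨ρ, c, rfl, htr, rfl⟩ hcyc

end

theorem second_local_preference_general (Q : Type*) [LinearOrder Q]
    (Γ : Set (Set (BTrans Q))) (hΓ : ∀ t ∈ Γ, UpClosed t)
    (I : Set Q)
    (u v : List (Set (BTrans Q))) (w : ℕ → Set (BTrans Q))
    (hv : ∀ t ∈ v, t ∈ Γ) (hw : ∀ j, w j ∈ Γ)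
    (h : InfAccept I (wcat u (wcat v w))) :
    InfAccept I (wcat u (wpow v)) ∨ InfAccept I (wcat u w) := by
  obtain ⟨p, hup, hp⟩ := h.exists_reach_of_wcat
  obtain ⟨q, hvq, hq⟩ := hp.exists_reach_of_wcat
  rcases le_or_gt q p with hqp | hpq
  · exact .inr (hup.infAccept_wcat (hq.of_le_start (hΓ _ (hw 0)) hqp))
  · exact .inl (hup.infAccept_wcat (hvq.infAccept_wpow_of_lt (fun t ht => hΓ _ (hv t ht)) hpq))

theorem second_local_preference (Q : Type*) [Fintype Q] [LinearOrder Q]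
    (Γ : Set (Set (BTrans Q))) (hΓ : ∀ t ∈ Γ, UpClosed t)
    (I : Set Q) (hI : DownClosed I)
    (u v : List (Set (BTrans Q))) (w : ℕ → Set (BTrans Q))
    (hu : ∀ t ∈ u, t ∈ Γ) (hv : ∀ t ∈ v, t ∈ Γ) (hw : ∀ j, w j ∈ Γ)
    (hvne : v ≠ [])
    (h : InfAccept I (wcat u (wcat v w))) :
    InfAccept I (wcat u (wpow v)) ∨ InfAccept I (wcat u w) :=
  second_local_preference_general Q Γ hΓ I u v w hv hw h
end

section
/- Totality of the induced preference preorder: if a language L ⊆ Π^ω satisfies the first local preference property (for all finite u,u' and infinite w,w': uw ∈ L and u'w' ∈ L imply uw' ∈ L or u'w ∈ L), then the relation ≤_L on Π^ω defined by w ≤_L w' iff (for all finite u, uw ∈ L implies uw' ∈ L) is a total preorder. -/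
/-- Concatenation of a finite word with an infinite word. -/
def catW {A : Type*} (u : List A) (w : ℕ → A) : ℕ → A :=
  fun j => if h : j < u.length then u.get ⟨j, h⟩ else w (j - u.length)

section Preference

variable {A : Type*} (L : Set (ℕ → A))

def FirstLocalPreference : Prop :=
  ∀ (u u' : List A) (w w' : ℕ → A),
    catW u w ∈ L → catW u' w' ∈ L → catW u w' ∈ L ∨ catW u' w ∈ L

/-- The paper's `w ≤_L w'`. -/
def PreferenceLE (w w' : ℕ → A) : Prop :=
  ∀ u : List A, catW u w ∈ L → catW u w' ∈ L

variable {L}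

theorem preferenceLE_refl (w : ℕ → A) : PreferenceLE L w w :=
  fun _ h => h

theorem PreferenceLE.trans {w₁ w₂ w₃ : ℕ → A} (h₁₂ : PreferenceLE L w₁ w₂)
    (h₂₃ : PreferenceLE L w₂ w₃) : PreferenceLE L w₁ w₃ :=
  fun u h => h₂₃ u (h₁₂ u h)

theorem FirstLocalPreference.preferenceLE_total (hL : FirstLocalPreference L) (w w' : ℕ → A) :
    PreferenceLE L w w' ∨ PreferenceLE L w' w := by
  rw [or_iff_not_imp_left]
  intro hww' v hv
  obtain ⟨u, hu, hu'⟩ : ∃ u, catW u w ∈ L ∧ catW u w' ∉ L := by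
    simpa [PreferenceLE] using hww'
  exact (hL u v w w' hu hv).resolve_left hu'

end Preference

theorem preference_total_preorder {A : Type*} (L : Set (ℕ → A))
    (h1 : ∀ (u u' : List A) (w w' : ℕ → A),
      catW u w ∈ L → catW u' w' ∈ L → catW u w' ∈ L ∨ catW u' w ∈ L) :
    (∀ w : ℕ → A, ∀ u : List A, catW u w ∈ L → catW u w ∈ L) ∧
    (∀ w₁ w₂ w₃ : ℕ → A,
      (∀ u : List A, catW u w₁ ∈ L → catW u w₂ ∈ L) →
      (∀ u : List A, catW u w₂ ∈ L → catW u w₃ ∈ L) →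
      (∀ u : List A, catW u w₁ ∈ L → catW u w₃ ∈ L)) ∧
    (∀ w w' : ℕ → A,
      (∀ u : List A, catW u w ∈ L → catW u w' ∈ L) ∨
      (∀ u : List A, catW u w' ∈ L → catW u w ∈ L)) :=
  ⟨preferenceLE_refl, fun _ _ _ => PreferenceLE.trans,
    FirstLocalPreference.preferenceLE_total (L := L) h1⟩
end

section
/- Derived preference for periodic words: suppose L ⊆ Π^ω satisfies all three local preference properties: (1) uw ∈ L and u'w' ∈ L imply uw' ∈ L or u'w ∈ L; (2) uvw ∈ L implies uv^ω ∈ L or uw ∈ L; (3) u(vv')^ω ∈ L implies uv^ω ∈ L or u(v')^ω ∈ L (for finite u,u', nonempty finite v,v', infinite w,w'). Then for all nonempty finite words v, v': (vv')^ω ≤_L v^ω or (vv')^ω ≤_L (v')^ω, where w ≤_L w' means uw ∈ L implies uw' ∈ L for all finite u. -/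
/-- Infinite periodic repetition v^ω of a nonempty finite word. -/
def powW {A : Type*} [Inhabited A] (v : List A) : ℕ → A :=
  fun j => v.getD (j % v.length) default

theorem Set.subset_or_subset_of_subset_union_of_total {α : Type*} {s t t' : Set α}
    (hs : s ⊆ t ∪ t') (htt' : t ⊆ t' ∨ t' ⊆ t) : s ⊆ t ∨ s ⊆ t' := by
  rcases htt' with h | h
  · exact Or.inr (Set.union_eq_right.2 h ▸ hs)
  · exact Or.inl (Set.union_eq_left.2 h ▸ hs)

section Contexts

variable {A : Type*} (L : Set (ℕ → A))

def contexts (w : ℕ → A) : Set (List A) := {u | catW u w ∈ L}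

theorem contexts_total_of_exchange
    (h1 : ∀ (u u' : List A) (w w' : ℕ → A),
      catW u w ∈ L → catW u' w' ∈ L → catW u w' ∈ L ∨ catW u' w ∈ L)
    (w w' : ℕ → A) : contexts L w ⊆ contexts L w' ∨ contexts L w' ⊆ contexts L w := by
  by_contra! h
  obtain ⟨u, huw, huw'⟩ := Set.not_subset.1 h.1
  obtain ⟨u', hu'w', hu'w⟩ := Set.not_subset.1 h.2
  exact (h1 u u' w w' huw hu'w').elim huw' hu'w

end Contexts

theorem periodic_preference_general {A : Type*} [Inhabited A] (L : Set (ℕ → A))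
    (h1 : ∀ (u u' : List A) (w w' : ℕ → A),
      catW u w ∈ L → catW u' w' ∈ L → catW u w' ∈ L ∨ catW u' w ∈ L)
    (h3 : ∀ (u v v' : List A), v ≠ [] → v' ≠ [] →
      catW u (powW (v ++ v')) ∈ L →
      catW u (powW v) ∈ L ∨ catW u (powW v') ∈ L) :
    ∀ v v' : List A, v ≠ [] → v' ≠ [] →
      (∀ u : List A, catW u (powW (v ++ v')) ∈ L → catW u (powW v) ∈ L) ∨
      (∀ u : List A, catW u (powW (v ++ v')) ∈ L → catW u (powW v') ∈ L) := by
  intro v v' hv hv'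
  have hsplit : contexts L (powW (v ++ v')) ⊆ contexts L (powW v) ∪ contexts L (powW v') :=
    fun u hu => h3 u v v' hv hv' hu
  exact Set.subset_or_subset_of_subset_union_of_total hsplit
    (contexts_total_of_exchange L h1 _ _)

theorem periodic_preference {A : Type*} [Inhabited A] (L : Set (ℕ → A))
    (h1 : ∀ (u u' : List A) (w w' : ℕ → A),
      catW u w ∈ L → catW u' w' ∈ L → catW u w' ∈ L ∨ catW u' w ∈ L)
    (h2 : ∀ (u v : List A) (w : ℕ → A), v ≠ [] →
      catW u (catW v w) ∈ L → catW u (powW v) ∈ L ∨ catW u w ∈ L)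
    (h3 : ∀ (u v v' : List A), v ≠ [] → v' ≠ [] →
      catW u (powW (v ++ v')) ∈ L →
      catW u (powW v) ∈ L ∨ catW u (powW v') ∈ L) :
    ∀ v v' : List A, v ≠ [] → v' ≠ [] →
      (∀ u : List A, catW u (powW (v ++ v')) ∈ L → catW u (powW v) ∈ L) ∨
      (∀ u : List A, catW u (powW (v ++ v')) ∈ L → catW u (powW v') ∈ L) :=
  periodic_preference_general L h1 h3
end

section
/- Third derived preference property: suppose L ⊆ Π^ω satisfies the three local preference properties (as in the previous statement). Then for every nonempty finite word v and infinite word w: vw ≤_L v^ω or vw ≤_L w, where x ≤_L y means ux ∈ L implies uy ∈ L for all finite u. -/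
theorem context_preorder_total {A : Type*} {L : Set (ℕ → A)}
    (h1 : ∀ (u u' : List A) (w w' : ℕ → A),
      catW u w ∈ L → catW u' w' ∈ L → catW u w' ∈ L ∨ catW u' w ∈ L)
    (x y : ℕ → A) :
    (∀ u : List A, catW u x ∈ L → catW u y ∈ L) ∨
      (∀ u : List A, catW u y ∈ L → catW u x ∈ L) := by
  by_contra! h
  obtain ⟨⟨u, hux, huy⟩, u', hu'y, hu'x⟩ := h
  exact (h1 u u' x y hux hu'y).elim huy hu'x

theorem third_derived_preference_general {A : Type*} [Inhabited A] (L : Set (ℕ → A))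
    (h1 : ∀ (u u' : List A) (w w' : ℕ → A),
      catW u w ∈ L → catW u' w' ∈ L → catW u w' ∈ L ∨ catW u' w ∈ L)
    (h2 : ∀ (u v : List A) (w : ℕ → A), v ≠ [] →
      catW u (catW v w) ∈ L → catW u (powW v) ∈ L ∨ catW u w ∈ L) :
    ∀ (v : List A) (w : ℕ → A), v ≠ [] →
      (∀ u : List A, catW u (catW v w) ∈ L → catW u (powW v) ∈ L) ∨
      (∀ u : List A, catW u (catW v w) ∈ L → catW u w ∈ L) := by
  intro v w hv
  rcases context_preorder_total h1 (powW v) w with hle | hle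
  · exact Or.inr fun u hu => (h2 u v w hv hu).elim (hle u) id
  · exact Or.inl fun u hu => (h2 u v w hv hu).elim id (hle u)

theorem third_derived_preference {A : Type*} [Inhabited A] (L : Set (ℕ → A))
    (h1 : ∀ (u u' : List A) (w w' : ℕ → A),
      catW u w ∈ L → catW u' w' ∈ L → catW u w' ∈ L ∨ catW u' w ∈ L)
    (h2 : ∀ (u v : List A) (w : ℕ → A), v ≠ [] →
      catW u (catW v w) ∈ L → catW u (powW v) ∈ L ∨ catW u w ∈ L)
    (h3 : ∀ (u v v' : List A), v ≠ [] → v' ≠ [] →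
      catW u (powW (v ++ v')) ∈ L →
      catW u (powW v) ∈ L ∨ catW u (powW v') ∈ L) :
    ∀ (v : List A) (w : ℕ → A), v ≠ [] →
      (∀ u : List A, catW u (catW v w) ∈ L → catW u (powW v) ∈ L) ∨
      (∀ u : List A, catW u (catW v w) ∈ L → catW u w ∈ L) :=
  third_derived_preference_general L h1 h2
end
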